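/- Let ℓ ≥ 1 and let y_1, …, y_ℓ be nonnegative real numbers. Call θ : {1,…,ℓ} × {2,…,ℓ+1} → {0,1} feasible if: (a) for every i ∈ {1,…,ℓ}, Σ_{j > i} θ_{ij} ≤ 1; (b) for every j ∈ {2,…,ℓ+1}, Σ_{i < j} θ_{ij} ≤ 1; (c) for every k ∈ {2,…,ℓ}, Σ_{i < k} θ_{ik} = Σ_{j > k} θ_{kj}; (d) Σ_{j > 1} θ_{1j} = 1; and (e) Σ_{i < ℓ+1} θ_{i(ℓ+1)} = 1. Then the minimum of Σ_{i=1}^{ℓ} Σ_{j=i+1}^{ℓ+1} (j − 1)·θ_{ij}·y_i over all feasible θ equals the minimum over all level subsets Q = {i_1, …, i_m} of {1,…,ℓ} of Σ_{k=1}^{m} (i_{k+1} − 1)·y_{i_k}. -/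

import Mathlib

/-- `Q` is a level subset of `{1, …, ℓ}` if `Q ⊆ {1, …, ℓ}` and `1 ∈ Q`. -/
def IsLevelSubset (ℓ : ℕ) (Q : Finset ℕ) : Prop :=
  Q ⊆ Finset.Icc 1 ℓ ∧ 1 ∈ Q

/-- The finite collection of all level subsets of `{1, …, ℓ}`. -/
def levelSubsets (ℓ : ℕ) : Finset (Finset ℕ) :=
  (Finset.Icc 1 ℓ).powerset.filter (fun Q => 1 ∈ Q)

lemma levelSubsets_nonempty {ℓ : ℕ} (hℓ : 1 ≤ ℓ) : (levelSubsets ℓ).Nonempty :=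
  ⟨{1}, by
    simp [levelSubsets, Finset.mem_filter, Finset.mem_powerset,
      Finset.singleton_subset_iff, Finset.mem_Icc, hℓ]⟩

/-- The successor of `i` in the level subset `Q`: the smallest element of `Q` larger
than `i`, with the convention that it is `ℓ + 1` if there is none. -/
def nextLevel (ℓ : ℕ) (Q : Finset ℕ) (i : ℕ) : ℕ :=
  if h : (Q.filter (fun j => i < j)).Nonempty then (Q.filter (fun j => i < j)).min' h
  else ℓ + 1

/-- `val(Q, y) = Σ_{k=1}^m (i_{k+1} − 1)·y_{i_k}`. -/
def lval (ℓ : ℕ) (Q : Finset ℕ) (y : ℕ → ℝ) : ℝ :=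
  ∑ i ∈ Q, ((nextLevel ℓ Q i : ℝ) - 1) * y i

/-- Feasibility of the 0/1 variables `θ : {1,…,ℓ} × {2,…,ℓ+1} → {0,1}` of the
column-generation integer program. -/
def ThetaFeasible (ℓ : ℕ) (θ : ℕ → ℕ → ℕ) : Prop :=
  (∀ i ∈ Finset.Icc 1 ℓ, ∀ j ∈ Finset.Icc 2 (ℓ + 1), θ i j ≤ 1) ∧
  (∀ i ∈ Finset.Icc 1 ℓ, ∑ j ∈ Finset.Icc (i + 1) (ℓ + 1), θ i j ≤ 1) ∧
  (∀ j ∈ Finset.Icc 2 (ℓ + 1), ∑ i ∈ Finset.Ico 1 j, θ i j ≤ 1) ∧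
  (∀ k ∈ Finset.Icc 2 ℓ, ∑ i ∈ Finset.Ico 1 k, θ i k = ∑ j ∈ Finset.Icc (k + 1) (ℓ + 1), θ k j) ∧
  (∑ j ∈ Finset.Icc 2 (ℓ + 1), θ 1 j = 1) ∧
  (∑ i ∈ Finset.Ico 1 (ℓ + 1), θ i (ℓ + 1) = 1)

lemma lt_nextLevel {ℓ i : ℕ} (Q : Finset ℕ) (hi : i ≤ ℓ) : i < nextLevel ℓ Q i := by
  unfold nextLevel
  split
  · next h =>
    have hm := (Q.filter (fun j => i < j)).min'_mem h
    exact (Finset.mem_filter.mp hm).2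
  · omega

lemma nextLevel_le {ℓ i : ℕ} {Q : Finset ℕ} (hQ : Q ⊆ Finset.Icc 1 ℓ) :
    nextLevel ℓ Q i ≤ ℓ + 1 := by
  unfold nextLevel
  split
  · next h =>
    have hm := (Q.filter (fun j => i < j)).min'_mem h
    have := Finset.mem_Icc.mp (hQ (Finset.mem_filter.mp hm).1)
    omega
  · exact le_refl _

lemma nextLevel_le_of_mem {ℓ i j : ℕ} {Q : Finset ℕ} (hj : j ∈ Q) (hij : i < j) :
    nextLevel ℓ Q i ≤ j := by
  have hne : (Q.filter (fun j => i < j)).Nonempty := ⟨j, Finset.mem_filter.mpr ⟨hj, hij⟩⟩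
  unfold nextLevel
  rw [dif_pos hne]
  exact Finset.min'_le _ _ (Finset.mem_filter.mpr ⟨hj, hij⟩)

lemma nextLevel_mem_or {ℓ i : ℕ} (Q : Finset ℕ) :
    nextLevel ℓ Q i ∈ Q ∨ nextLevel ℓ Q i = ℓ + 1 := by
  unfold nextLevel
  split
  · next h => exact Or.inl (Finset.mem_filter.mp ((Q.filter (fun j => i < j)).min'_mem h)).1
  · exact Or.inr rfl

lemma nextLevel_eq_top {ℓ i : ℕ} {Q : Finset ℕ} (h : ∀ q ∈ Q, ¬ i < q) :
    nextLevel ℓ Q i = ℓ + 1 := by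
  unfold nextLevel
  rw [dif_neg]
  rintro ⟨q, hq⟩
  have := Finset.mem_filter.mp hq
  exact h q this.1 this.2

/-- θ built from level subset Q -/
def thetaOf (ℓ : ℕ) (Q : Finset ℕ) (i j : ℕ) : ℕ :=
  if i ∈ Q ∧ nextLevel ℓ Q i = j then 1 else 0

section PartA
variable {ℓ : ℕ} {Q : Finset ℕ} (hQ : Q ⊆ Finset.Icc 1 ℓ) (h1 : 1 ∈ Q)

include hQ in
lemma rowSum (i : ℕ) (hi : i ∈ Finset.Icc 1 ℓ) :
    ∑ j ∈ Finset.Icc (i + 1) (ℓ + 1), thetaOf ℓ Q i j = if i ∈ Q then 1 else 0 := by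
  by_cases hiQ : i ∈ Q
  · rw [if_pos hiQ]
    have h1 : ∀ j ∈ Finset.Icc (i + 1) (ℓ + 1), thetaOf ℓ Q i j
        = if nextLevel ℓ Q i = j then 1 else 0 := by
      intro j _; simp [thetaOf, hiQ]
    rw [Finset.sum_congr rfl h1, Finset.sum_ite_eq, if_pos]
    rw [Finset.mem_Icc]
    have := lt_nextLevel Q (Finset.mem_Icc.mp hi).2
    have := nextLevel_le (Q := Q) (i := i) hQ
    omega
  · rw [if_neg hiQ]
    apply Finset.sum_eq_zero
    intro j _; simp [thetaOf, hiQ]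

include hQ h1 in
lemma colSum (k : ℕ) (hk : k ∈ Finset.Icc 2 (ℓ + 1)) :
    ∑ i ∈ Finset.Ico 1 k, thetaOf ℓ Q i k = if k ∈ Q ∨ k = ℓ + 1 then 1 else 0 := by
  rw [Finset.mem_Icc] at hk
  by_cases hkQ : k ∈ Q ∨ k = ℓ + 1
  · rw [if_pos hkQ]
    have hne : (Q.filter (fun j => j < k)).Nonempty :=
      ⟨1, Finset.mem_filter.mpr ⟨h1, by omega⟩⟩
    set i₀ := (Q.filter (fun j => j < k)).max' hne with hi₀
    have hi₀mem := Finset.mem_filter.mp ((Q.filter (fun j => j < k)).max'_mem hne)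
    have hi₀max : ∀ q ∈ Q, q < k → q ≤ i₀ := by
      intro q hq hqk
      exact Finset.le_max' (Q.filter (fun j => j < k)) q (Finset.mem_filter.mpr ⟨hq, hqk⟩)
    have hnl : nextLevel ℓ Q i₀ = k := by
      rcases hkQ with hkQ | rfl
      · have hle : nextLevel ℓ Q i₀ ≤ k := nextLevel_le_of_mem hkQ hi₀mem.2
        rcases nextLevel_mem_or (ℓ := ℓ) (i := i₀) Q with hmem | htop
        · by_contra hne'
          have h2 : nextLevel ℓ Q i₀ < k := lt_of_le_of_ne hle hne'
          have h3 := hi₀max _ hmem h2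
          have h4 : i₀ < nextLevel ℓ Q i₀ := by
            apply lt_nextLevel
            have := Finset.mem_Icc.mp (hQ hi₀mem.1); omega
          omega
        · omega
      · apply nextLevel_eq_top
        intro q hq hlt
        have hqk : q < ℓ + 1 := by have := Finset.mem_Icc.mp (hQ hq); omega
        exact absurd (hi₀max q hq hqk) (by omega)
    have huniq : ∀ i ∈ Finset.Ico 1 k, thetaOf ℓ Q i k = if i = i₀ then 1 else 0 := by
      intro i hi
      rw [Finset.mem_Ico] at hi
      by_cases he : i = i₀
      · subst he; have hi₀Q : i₀ ∈ Q := hi₀mem.1; simp [thetaOf, hi₀Q, hnl]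
      · rw [if_neg he]
        unfold thetaOf
        rw [if_neg]
        rintro ⟨hiQ, hinl⟩
        rcases lt_or_gt_of_ne he with hlt | hgt
        · -- i < i₀ : nextLevel i ≤ i₀ < k, contradiction with hinl
          have := nextLevel_le_of_mem (ℓ := ℓ) hi₀mem.1 hlt
          have : nextLevel ℓ Q i ≤ i₀ := this
          omega
        · exact absurd (hi₀max i hiQ hi.2) (by omega)
    rw [Finset.sum_congr rfl huniq, Finset.sum_ite_eq', if_pos]
    rw [Finset.mem_Ico]
    have := Finset.mem_Icc.mp (hQ hi₀mem.1)
    exact ⟨this.1, hi₀mem.2⟩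
  · rw [if_neg hkQ]
    push_neg at hkQ
    apply Finset.sum_eq_zero
    intro i _
    unfold thetaOf
    rw [if_neg]
    rintro ⟨_, hinl⟩
    rcases nextLevel_mem_or (ℓ := ℓ) (i := i) Q with hmem | htop
    · exact hkQ.1 (hinl ▸ hmem)
    · exact hkQ.2 (hinl ▸ htop)

include hQ h1 in
lemma thetaOf_feasible (hℓ : 1 ≤ ℓ) :
    (∀ i ∈ Finset.Icc 1 ℓ, ∀ j ∈ Finset.Icc 2 (ℓ + 1), thetaOf ℓ Q i j ≤ 1) ∧
    (∀ i ∈ Finset.Icc 1 ℓ, ∑ j ∈ Finset.Icc (i + 1) (ℓ + 1), thetaOf ℓ Q i j ≤ 1) ∧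
    (∀ j ∈ Finset.Icc 2 (ℓ + 1), ∑ i ∈ Finset.Ico 1 j, thetaOf ℓ Q i j ≤ 1) ∧
    (∀ k ∈ Finset.Icc 2 ℓ, ∑ i ∈ Finset.Ico 1 k, thetaOf ℓ Q i k
      = ∑ j ∈ Finset.Icc (k + 1) (ℓ + 1), thetaOf ℓ Q k j) ∧
    (∑ j ∈ Finset.Icc 2 (ℓ + 1), thetaOf ℓ Q 1 j = 1) ∧
    (∑ i ∈ Finset.Ico 1 (ℓ + 1), thetaOf ℓ Q i (ℓ + 1) = 1) := by
  refine ⟨fun i _ j _ => by unfold thetaOf; split <;> omega, ?_, ?_, ?_, ?_, ?_⟩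
  · intro i hi; rw [rowSum hQ i hi]; split <;> omega
  · intro j hj; rw [colSum hQ h1 j hj]; split <;> omega
  · intro k hk
    rw [Finset.mem_Icc] at hk
    rw [colSum hQ h1 k (by rw [Finset.mem_Icc]; omega),
        rowSum hQ k (by rw [Finset.mem_Icc]; omega)]
    have : (k ∈ Q ∨ k = ℓ + 1) ↔ k ∈ Q := by
      constructor
      · rintro (h | h)
        · exact h
        · omega
      · exact Or.inl
    rw [if_congr this rfl rfl]
  · have := rowSum hQ 1 (by rw [Finset.mem_Icc]; omega)
    rw [show Finset.Icc 2 (ℓ+1) = Finset.Icc (1+1) (ℓ+1) from rfl, this, if_pos h1]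
  · have := colSum hQ h1 (ℓ + 1) (by rw [Finset.mem_Icc]; omega)
    rw [this, if_pos (Or.inr rfl)]

include hQ in
lemma thetaOf_value (y : ℕ → ℝ) :
    ∑ i ∈ Finset.Icc 1 ℓ, ∑ j ∈ Finset.Icc (i + 1) (ℓ + 1),
        ((j : ℝ) - 1) * (thetaOf ℓ Q i j : ℝ) * y i
      = ∑ i ∈ Q, ((nextLevel ℓ Q i : ℝ) - 1) * y i := by
  have hinner : ∀ i ∈ Finset.Icc 1 ℓ,
      ∑ j ∈ Finset.Icc (i + 1) (ℓ + 1), ((j : ℝ) - 1) * (thetaOf ℓ Q i j : ℝ) * y i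
        = if i ∈ Q then ((nextLevel ℓ Q i : ℝ) - 1) * y i else 0 := by
    intro i hi
    by_cases hiQ : i ∈ Q
    · rw [if_pos hiQ]
      have hcong : ∀ j ∈ Finset.Icc (i + 1) (ℓ + 1),
          ((j : ℝ) - 1) * (thetaOf ℓ Q i j : ℝ) * y i
            = if nextLevel ℓ Q i = j then ((j : ℝ) - 1) * y i else 0 := by
        intro j _
        unfold thetaOf
        by_cases he : nextLevel ℓ Q i = j <;> simp [he, hiQ]
      rw [Finset.sum_congr rfl hcong, Finset.sum_ite_eq, if_pos]
      rw [Finset.mem_Icc]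
      have := lt_nextLevel Q (Finset.mem_Icc.mp hi).2
      have := nextLevel_le (Q := Q) (i := i) hQ
      omega
    · rw [if_neg hiQ]
      apply Finset.sum_eq_zero
      intro j _; simp [thetaOf, hiQ]
  rw [Finset.sum_congr rfl hinner, Finset.sum_ite_mem,
      Finset.inter_eq_right.mpr hQ]

end PartA

noncomputable def thetaNext (ℓ : ℕ) (θ : ℕ → ℕ → ℕ) (i : ℕ) : ℕ :=
  if h : ∃ j ∈ Finset.Icc (i + 1) (ℓ + 1), θ i j = 1 then h.choose else ℓ + 1

noncomputable def pathFun (ℓ : ℕ) (θ : ℕ → ℕ → ℕ) : ℕ → ℕ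
  | 0 => 1
  | n + 1 => thetaNext ℓ θ (pathFun ℓ θ n)

section PartB
variable {ℓ : ℕ} {θ : ℕ → ℕ → ℕ}

lemma thetaNext_spec {i : ℕ} (h : ∃ j ∈ Finset.Icc (i + 1) (ℓ + 1), θ i j = 1) :
    thetaNext ℓ θ i ∈ Finset.Icc (i + 1) (ℓ + 1) ∧ θ i (thetaNext ℓ θ i) = 1 := by
  unfold thetaNext
  rw [dif_pos h]
  obtain ⟨hj, hθ⟩ := h.choose_spec
  exact ⟨hj, hθ⟩

lemma thetaNext_le (i : ℕ) : thetaNext ℓ θ i ≤ ℓ + 1 := by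
  unfold thetaNext
  split
  · next h => exact (Finset.mem_Icc.mp h.choose_spec.1).2
  · exact le_refl _

lemma thetaNext_gt {i : ℕ} (hi : i ≤ ℓ) : i < thetaNext ℓ θ i := by
  unfold thetaNext
  split
  · next h => have := (Finset.mem_Icc.mp h.choose_spec.1).1; omega
  · omega

lemma thetaNext_top {i : ℕ} (hi : ℓ + 1 ≤ i) : thetaNext ℓ θ i = ℓ + 1 := by
  unfold thetaNext
  rw [dif_neg]
  rintro ⟨j, hj, -⟩
  have := Finset.mem_Icc.mp hj
  omega

lemma pathFun_le (n : ℕ) : pathFun ℓ θ n ≤ ℓ + 1 := by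
  induction n with
  | zero => simp [pathFun]
  | succ n _ => exact thetaNext_le _

lemma pathFun_mono : Monotone (pathFun ℓ θ) := by
  apply monotone_nat_of_le_succ
  intro n
  by_cases h : pathFun ℓ θ n ≤ ℓ
  · exact le_of_lt (thetaNext_gt h)
  · have h1 : pathFun ℓ θ n = ℓ + 1 := le_antisymm (pathFun_le n) (by omega)
    show pathFun ℓ θ n ≤ thetaNext ℓ θ (pathFun ℓ θ n)
    rw [thetaNext_top (by omega)]
    omega

lemma pathFun_pos (n : ℕ) : 1 ≤ pathFun ℓ θ n := by
  have := pathFun_mono (ℓ := ℓ) (θ := θ) (Nat.zero_le n)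
  simpa [pathFun] using this

lemma pathFun_strict {n : ℕ} (hn : pathFun ℓ θ n ≤ ℓ) :
    pathFun ℓ θ n < pathFun ℓ θ (n + 1) :=
  thetaNext_gt hn

lemma pathFun_prev_le {n : ℕ} (hn : pathFun ℓ θ (n + 1) ≤ ℓ) : pathFun ℓ θ n ≤ ℓ := by
  by_contra h
  have h1 : pathFun ℓ θ n = ℓ + 1 := le_antisymm (pathFun_le n) (by omega)
  have : pathFun ℓ θ (n + 1) = ℓ + 1 := by
    show thetaNext ℓ θ (pathFun ℓ θ n) = ℓ + 1
    exact thetaNext_top (by omega)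
  omega

lemma path_edge (hf : ThetaFeasible ℓ θ) (hℓ : 1 ≤ ℓ) :
    ∀ n, pathFun ℓ θ n ≤ ℓ →
      pathFun ℓ θ (n + 1) ∈ Finset.Icc (pathFun ℓ θ n + 1) (ℓ + 1) ∧
      θ (pathFun ℓ θ n) (pathFun ℓ θ (n + 1)) = 1 := by
  intro n
  induction n with
  | zero =>
    intro _
    have hex : ∃ j ∈ Finset.Icc (1 + 1) (ℓ + 1), θ 1 j = 1 := by
      have hsum := hf.2.2.2.2.1
      obtain ⟨j, hj, hne⟩ := Finset.exists_ne_zero_of_sum_ne_zero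
        (by rw [hsum]; omega : ∑ j ∈ Finset.Icc 2 (ℓ + 1), θ 1 j ≠ 0)
      have hle := hf.1 1 (Finset.mem_Icc.mpr ⟨le_refl 1, hℓ⟩) j hj
      exact ⟨j, hj, by omega⟩
    exact thetaNext_spec hex
  | succ n ih =>
    intro hn1
    have hn : pathFun ℓ θ n ≤ ℓ := pathFun_prev_le hn1
    obtain ⟨hmem, hedge⟩ := ih hn
    set k := pathFun ℓ θ (n + 1) with hk
    have hkIcc := Finset.mem_Icc.mp hmem
    have hpos := pathFun_pos (ℓ := ℓ) (θ := θ) n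
    have hcons := hf.2.2.2.1 k (Finset.mem_Icc.mpr ⟨by omega, hn1⟩)
    have hlhs : 1 ≤ ∑ i ∈ Finset.Ico 1 k, θ i k := by
      have hstep := Finset.single_le_sum (f := fun i => θ i k)
        (fun i _ => Nat.zero_le _)
        (Finset.mem_Ico.mpr ⟨hpos, by omega⟩ : pathFun ℓ θ n ∈ Finset.Ico 1 k)
      have hstep' : θ (pathFun ℓ θ n) k ≤ ∑ i ∈ Finset.Ico 1 k, θ i k := hstep
      omega
    rw [hcons] at hlhs
    have hex : ∃ j ∈ Finset.Icc (k + 1) (ℓ + 1), θ k j = 1 := by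
      obtain ⟨j, hj, hne⟩ := Finset.exists_ne_zero_of_sum_ne_zero (by omega :
        ∑ j ∈ Finset.Icc (k + 1) (ℓ + 1), θ k j ≠ 0)
      have hjIcc := Finset.mem_Icc.mp hj
      have hle := hf.1 k (Finset.mem_Icc.mpr ⟨by omega, hn1⟩) j
        (Finset.mem_Icc.mpr ⟨by omega, hjIcc.2⟩)
      exact ⟨j, hj, by omega⟩
    exact thetaNext_spec hex

noncomputable def pathSet (ℓ : ℕ) (θ : ℕ → ℕ → ℕ) : Finset ℕ :=
  @Finset.filter _ (fun i => ∃ n, pathFun ℓ θ n = i) (Classical.decPred _) (Finset.Icc 1 ℓ)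

lemma mem_pathSet {i : ℕ} :
    i ∈ pathSet ℓ θ ↔ i ∈ Finset.Icc 1 ℓ ∧ ∃ n, pathFun ℓ θ n = i := by
  exact @Finset.mem_filter ℕ (fun i => ∃ n, pathFun ℓ θ n = i) (Classical.decPred _) (Finset.Icc 1 ℓ) i

lemma pathSet_subset : pathSet ℓ θ ⊆ Finset.Icc 1 ℓ := fun i hi => (mem_pathSet.mp hi).1

lemma one_mem_pathSet (hℓ : 1 ≤ ℓ) : 1 ∈ pathSet ℓ θ := by
  exact mem_pathSet.mpr ⟨Finset.mem_Icc.mpr ⟨le_refl 1, hℓ⟩, 0, rfl⟩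

lemma nextLevel_pathSet {n : ℕ} (hn : pathFun ℓ θ n ≤ ℓ) :
    nextLevel ℓ (pathSet ℓ θ) (pathFun ℓ θ n) = pathFun ℓ θ (n + 1) := by
  have hmem_gt : ∀ q ∈ pathSet ℓ θ, pathFun ℓ θ n < q → pathFun ℓ θ (n + 1) ≤ q := by
    intro q hq hgt
    obtain ⟨hqIcc, m, rfl⟩ := mem_pathSet.mp hq
    have hmn : n < m := by
      by_contra h
      have := pathFun_mono (ℓ := ℓ) (θ := θ) (le_of_not_gt h)
      omega
    exact pathFun_mono hmn
  by_cases h1 : pathFun ℓ θ (n + 1) ≤ ℓ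
  · have hmem : pathFun ℓ θ (n + 1) ∈ pathSet ℓ θ := by
      exact mem_pathSet.mpr ⟨Finset.mem_Icc.mpr ⟨pathFun_pos _, h1⟩, n + 1, rfl⟩
    have hlt : pathFun ℓ θ n < pathFun ℓ θ (n + 1) := pathFun_strict hn
    have hne : ((pathSet ℓ θ).filter (fun j => pathFun ℓ θ n < j)).Nonempty :=
      ⟨_, Finset.mem_filter.mpr ⟨hmem, hlt⟩⟩
    apply le_antisymm
    · exact nextLevel_le_of_mem hmem hlt
    · unfold nextLevel
      rw [dif_pos hne]
      apply Finset.le_min'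
      intro q hq
      have := Finset.mem_filter.mp hq
      exact hmem_gt q this.1 this.2
  · have h2 : pathFun ℓ θ (n + 1) = ℓ + 1 := le_antisymm (pathFun_le _) (by omega)
    rw [h2]
    apply nextLevel_eq_top
    intro q hq hgt
    have := hmem_gt q hq hgt
    have := Finset.mem_Icc.mp (pathSet_subset hq)
    omega

end PartB

/-- The minimum of `Σ_i Σ_j (j−1)·θ_{ij}·y_i` over all feasible `θ` equals the
minimum over all level subsets `Q` of `Σ_k (i_{k+1} − 1)·y_{i_k}`. -/
theorem stmt_17 (ℓ : ℕ) (hℓ : 1 ≤ ℓ) (y : ℕ → ℝ)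
    (hy : ∀ i ∈ Finset.Icc 1 ℓ, 0 ≤ y i) :
    IsLeast
      {v : ℝ | ∃ θ : ℕ → ℕ → ℕ, ThetaFeasible ℓ θ ∧
        v = ∑ i ∈ Finset.Icc 1 ℓ, ∑ j ∈ Finset.Icc (i + 1) (ℓ + 1),
              ((j : ℝ) - 1) * (θ i j : ℝ) * y i}
      ((levelSubsets ℓ).inf' (levelSubsets_nonempty hℓ) (fun Q => lval ℓ Q y)) := by
  constructor
  · -- membership: the infimum is attained by the θ built from an optimal level subset
    obtain ⟨Q, hQmem, hinf⟩ :=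
      Finset.exists_mem_eq_inf' (levelSubsets_nonempty hℓ) (fun Q => lval ℓ Q y)
    have hQ' := Finset.mem_filter.mp hQmem
    have hQ : Q ⊆ Finset.Icc 1 ℓ := Finset.mem_powerset.mp hQ'.1
    have h1 : 1 ∈ Q := hQ'.2
    refine ⟨thetaOf ℓ Q, thetaOf_feasible hQ h1 hℓ, ?_⟩
    rw [thetaOf_value hQ y]
    exact hinf
  · rintro v ⟨θ, hf, rfl⟩
    have hQmem : pathSet ℓ θ ∈ levelSubsets ℓ :=
      Finset.mem_filter.mpr ⟨Finset.mem_powerset.mpr pathSet_subset, one_mem_pathSet hℓ⟩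
    refine le_trans (Finset.inf'_le _ hQmem) ?_
    show lval ℓ (pathSet ℓ θ) y ≤ _
    unfold lval
    have key : ∀ i ∈ pathSet ℓ θ,
        ((nextLevel ℓ (pathSet ℓ θ) i : ℝ) - 1) * y i
          ≤ ∑ j ∈ Finset.Icc (i + 1) (ℓ + 1), ((j : ℝ) - 1) * (θ i j : ℝ) * y i := by
      intro i hi
      obtain ⟨hiIcc, n, rfl⟩ := mem_pathSet.mp hi
      have hn : pathFun ℓ θ n ≤ ℓ := (Finset.mem_Icc.mp hiIcc).2
      obtain ⟨hmem, hedge⟩ := path_edge hf hℓ n hn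
      rw [nextLevel_pathSet hn]
      have hnn : ∀ j ∈ Finset.Icc (pathFun ℓ θ n + 1) (ℓ + 1),
          0 ≤ ((j : ℝ) - 1) * (θ (pathFun ℓ θ n) j : ℝ) * y (pathFun ℓ θ n) := by
        intro j hj
        have hj' := Finset.mem_Icc.mp hj
        have hp := pathFun_pos (ℓ := ℓ) (θ := θ) n
        apply mul_nonneg (mul_nonneg ?_ (Nat.cast_nonneg _)) (hy _ hiIcc)
        rw [sub_nonneg]
        exact_mod_cast Nat.one_le_iff_ne_zero.mpr (by omega)
      have hsingle := Finset.single_le_sum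
        (f := fun j : ℕ => ((j : ℝ) - 1) * (θ (pathFun ℓ θ n) j : ℝ) * y (pathFun ℓ θ n))
        hnn hmem
      simpa [hedge] using hsingle
    calc ∑ i ∈ pathSet ℓ θ, ((nextLevel ℓ (pathSet ℓ θ) i : ℝ) - 1) * y i
        ≤ ∑ i ∈ pathSet ℓ θ, ∑ j ∈ Finset.Icc (i + 1) (ℓ + 1),
            ((j : ℝ) - 1) * (θ i j : ℝ) * y i := Finset.sum_le_sum key
      _ ≤ ∑ i ∈ Finset.Icc 1 ℓ, ∑ j ∈ Finset.Icc (i + 1) (ℓ + 1),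
            ((j : ℝ) - 1) * (θ i j : ℝ) * y i := by
          apply Finset.sum_le_sum_of_subset_of_nonneg pathSet_subset
          intro i hiIcc _
          apply Finset.sum_nonneg
          intro j hj
          have hj' := Finset.mem_Icc.mp hj
          have hi' := Finset.mem_Icc.mp hiIcc
          apply mul_nonneg (mul_nonneg ?_ (Nat.cast_nonneg _)) (hy _ hiIcc)
          rw [sub_nonneg]
          exact_mod_cast Nat.one_le_iff_ne_zero.mpr (by omega)
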